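/- arXiv:2209.13343 — 3 statements merged into one kernel-verified Lean document; each statement's English description precedes it below -/
import Mathlib

section
/- Let s_i, s_j be non-negative integers and let C be an integer with |C| ≤ s_i·s_j and C ≡ s_i·s_j (mod 2). Then there exists a word w over the two-letter alphabet {A_i, A_j} containing exactly s_i occurrences of A_i and s_j occurrences of A_j such that δ_ij(w) = C. -/
/-- Signed count of scattered length-2 subwords: number of occurrences of `i ⋯ j`
minus number of occurrences of `j ⋯ i` in the word. -/
def delta {α : Type*} [DecidableEq α] (i j : α) : List α → ℤ
  | [] => 0
  | a :: w => delta i j w + (if a = i then (w.count j : ℤ) else 0)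
      - (if a = j then (w.count i : ℤ) else 0)

lemma delta_append {α : Type*} [DecidableEq α] (i j : α) (u v : List α) :
    delta i j (u ++ v) = delta i j u + delta i j v
      + ((u.count i : ℤ) * v.count j - (u.count j : ℤ) * v.count i) := by
  induction u with
  | nil => simp [delta]
  | cons a u ih =>
    simp only [List.cons_append, delta, List.append_eq, ih, List.count_append]
    split_ifs <;> simp_all [List.count_cons] <;> ring

lemma delta_replicate {α : Type*} [DecidableEq α] (i j a : α) (n : ℕ) :
    delta i j (List.replicate n a) = 0 := by
  induction n with
  | zero => simp [delta]
  | succ n ih =>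
    simp only [List.replicate_succ, delta, ih, List.count_replicate]
    by_cases hi : a = i <;> by_cases hj : a = j <;> simp_all

/-- Over the two-letter alphabet {0, 1} (letter 0 playing the role of A_i and
letter 1 the role of A_j), any target value C with |C| ≤ s_i s_j and
C ≡ s_i s_j (mod 2) is achieved as δ_ij(w) for some word w with s_i
occurrences of the first letter and s_j of the second. -/
theorem stmt1 (si sj : ℕ) (C : ℤ) (h1 : |C| ≤ (si : ℤ) * (sj : ℤ))
    (h2 : C ≡ (si : ℤ) * (sj : ℤ) [ZMOD 2]) :
    ∃ w : List (Fin 2), w.count 0 = si ∧ w.count 1 = sj ∧ delta 0 1 w = C := by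
  rcases abs_le.1 h1 with ⟨hC1, hC2⟩
  rcases sj.eq_zero_or_pos with rfl | hsj
  · refine ⟨List.replicate si 0, ?_, ?_, ?_⟩
    · simp [List.count_replicate]
    · simp [List.count_replicate]
    · have : C = 0 := by push_cast at hC1 hC2; omega
      simp [delta_replicate, this]
  -- main case
  obtain ⟨k, hk⟩ : (2:ℤ) ∣ ((si:ℤ) * sj - C) := h2.dvd
  have hk0 : 0 ≤ k := by nlinarith
  have hksisj : k ≤ (si:ℤ) * sj := by nlinarith
  set m : ℕ := k.toNat with hm
  have hkm : (m : ℤ) = k := Int.toNat_of_nonneg hk0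
  have hmle : m ≤ si * sj := by
    have : (m : ℤ) ≤ (si:ℤ) * sj := by rw [hkm]; exact hksisj
    exact_mod_cast this
  set q : ℕ := m / sj with hq
  set r : ℕ := m % sj with hr
  have hmqr : q * sj + r = m := by
    simpa [hq, hr, Nat.mul_comm] using Nat.div_add_mod m sj
  have hrlt : r < sj := Nat.mod_lt _ hsj
  set ε : ℕ := if r = 0 then 0 else 1 with hε
  have hεr : ε * r = r := by by_cases h : r = 0 <;> simp [hε, h]
  have hqε : q + ε ≤ si := by
    by_cases h : r = 0
    · have : q ≤ si := by
        have := Nat.div_le_div_right (c := sj) hmle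
        rwa [Nat.mul_div_cancel _ hsj] at this
      simp [hε, h]; omega
    · have hq' : q < si := by
        have h1' : q * sj < si * sj := by omega
        exact Nat.lt_of_mul_lt_mul_right h1'
      simp [hε, h]; omega
  refine ⟨List.replicate (si - q - ε) 0 ++ List.replicate r 1 ++ List.replicate ε 0
      ++ List.replicate (sj - r) 1 ++ List.replicate q 0, ?_, ?_, ?_⟩
  · simp [List.count_append, List.count_replicate]
    omega
  · simp [List.count_append, List.count_replicate]
    omega
  · simp only [delta_append, delta_replicate, List.count_append, List.count_replicate]
    have h01 : (0 : Fin 2) ≠ 1 := by decide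
    simp [h01, h01.symm]
    have ha : ((si - q - ε : ℕ) : ℤ) = (si : ℤ) - q - ε := by
      have : q + ε ≤ si := hqε
      push_cast [Nat.sub_sub]
      omega
    have hb : ((sj - r : ℕ) : ℤ) = (sj : ℤ) - r := by
      have : r ≤ sj := le_of_lt hrlt
      push_cast [this]
      ring
    have hmz : (q : ℤ) * sj + r = m := by exact_mod_cast hmqr
    have hεrz : (ε : ℤ) * r = r := by exact_mod_cast hεr
    have hCz : C = (si : ℤ) * sj - 2 * m := by rw [hkm]; linarith
    rw [ha, hb]
    nlinarith [hεrz, hmz, hCz]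
end

section
/- Let C_G and C_H be cones in ℚ² generated by finite sets {u_1,...,u_K} and {v_1,...,v_M} respectively. If the cone C_G ∩ C_H has dimension two (i.e., contains two linearly independent vectors and an interior point), then there exist strictly positive integers X_1,...,X_K and Y_1,...,Y_M such that Σ_{i=1}^K X_i u_i = Σ_{j=1}^M Y_j v_j. -/
/-- The cone in ℚ² generated by a finite family of vectors: all non-negative
rational combinations. -/
def coneGen {K : ℕ} (u : Fin K → (Fin 2 → ℚ)) : Set (Fin 2 → ℚ) :=
  {x | ∃ c : Fin K → ℚ, (∀ i, 0 ≤ c i) ∧ x = ∑ i, c i • u i}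

/-- In an open subset of ℚ², one can move a little in any direction. -/
lemma stmt12_aux1 (O : Set (Fin 2 → ℚ)) (hO : IsOpen O) (p w : Fin 2 → ℚ) (hp : p ∈ O) :
    ∃ δ : ℚ, 0 < δ ∧ p - δ • w ∈ O := by
  have hc : Continuous fun t : ℚ => p - t • w := by continuity
  have hU : IsOpen ((fun t : ℚ => p - t • w) ⁻¹' O) := hO.preimage hc
  have h0 : (0 : ℚ) ∈ (fun t : ℚ => p - t • w) ⁻¹' O := by simp [hp]
  obtain ⟨l, r, ⟨hl, hr⟩, hsub⟩ := mem_nhds_iff_exists_Ioo_subset.mp (hU.mem_nhds h0)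
  exact ⟨r / 2, by linarith, hsub ⟨by linarith, by linarith⟩⟩

/-- Clearing the denominator of a positive rational. -/
lemma stmt12_aux2 (q : ℚ) (hq : 0 < q) (D : ℕ) (hD : 0 < D) (hdvd : q.den ∣ D) :
    ∃ z : ℤ, 0 < z ∧ (z : ℚ) = D * q := by
  obtain ⟨k, hk⟩ := hdvd
  have hk0 : 0 < k := by
    rcases Nat.eq_zero_or_pos k with h | h
    · subst h; simp at hk; omega
    · exact h
  refine ⟨q.num * k, by positivity, ?_⟩
  have hnum : (q.num : ℚ) = q * q.den := (Rat.mul_den_eq_num q).symm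
  push_cast
  rw [hnum, hk]
  push_cast
  ring

/-- An interior point of a finitely generated cone is a combination with
strictly positive coefficients. -/
lemma stmt12_aux3 {K : ℕ} (u : Fin K → (Fin 2 → ℚ)) (S : Set (Fin 2 → ℚ))
    (hS : S ⊆ coneGen u) (p : Fin 2 → ℚ) (hp : p ∈ interior S) :
    ∃ a : Fin K → ℚ, (∀ i, 0 < a i) ∧ p = ∑ i, a i • u i := by
  obtain ⟨δ, hδ, hmem⟩ := stmt12_aux1 _ isOpen_interior p (∑ i, u i) hp
  obtain ⟨c, hc, hceq⟩ := hS (interior_subset hmem)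
  refine ⟨fun i => c i + δ, fun i => by dsimp; linarith [hc i], ?_⟩
  have : ∑ i, (c i + δ) • u i = (∑ i, c i • u i) + δ • ∑ i, u i := by
    rw [Finset.smul_sum, ← Finset.sum_add_distrib]
    exact Finset.sum_congr rfl fun i _ => (add_smul _ _ _)
  rw [this, ← hceq]
  abel

/-- If the intersection of two finitely generated cones in ℚ² has dimension two
(contains two linearly independent vectors and an interior point), then some
strictly positive integer combinations of the two generating families agree. -/
theorem stmt12 (K M : ℕ) (u : Fin K → (Fin 2 → ℚ)) (v : Fin M → (Fin 2 → ℚ))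
    (hind : ∃ a ∈ coneGen u ∩ coneGen v, ∃ b ∈ coneGen u ∩ coneGen v,
      LinearIndependent ℚ ![a, b])
    (hint : (interior (coneGen u ∩ coneGen v)).Nonempty) :
    ∃ (X : Fin K → ℤ) (Y : Fin M → ℤ), (∀ i, 0 < X i) ∧ (∀ j, 0 < Y j) ∧
      ∑ i, (X i : ℚ) • u i = ∑ j, (Y j : ℚ) • v j := by
  obtain ⟨p, hp⟩ := hint
  obtain ⟨a, ha, haeq⟩ := stmt12_aux3 u _ Set.inter_subset_left p hp
  obtain ⟨b, hb, hbeq⟩ := stmt12_aux3 v _ Set.inter_subset_right p hp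
  set D : ℕ := (∏ i, (a i).den) * (∏ j, (b j).den) with hDdef
  have hD : 0 < D := by
    apply Nat.mul_pos <;> exact Finset.prod_pos fun x _ => Rat.pos _
  have hX : ∀ i, ∃ z : ℤ, 0 < z ∧ (z : ℚ) = D * a i := fun i =>
    stmt12_aux2 _ (ha i) D hD
      (dvd_mul_of_dvd_left (Finset.dvd_prod_of_mem _ (Finset.mem_univ i)) _)
  have hY : ∀ j, ∃ z : ℤ, 0 < z ∧ (z : ℚ) = D * b j := fun j =>
    stmt12_aux2 _ (hb j) D hD
      (dvd_mul_of_dvd_right (Finset.dvd_prod_of_mem _ (Finset.mem_univ j)) _)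
  choose X hX0 hXeq using hX
  choose Y hY0 hYeq using hY
  refine ⟨X, Y, hX0, hY0, ?_⟩
  calc ∑ i, (X i : ℚ) • u i = ∑ i, ((D : ℚ) * a i) • u i := by
        exact Finset.sum_congr rfl fun i _ => by rw [hXeq]
    _ = (D : ℚ) • ∑ i, a i • u i := by
        rw [Finset.smul_sum]
        exact Finset.sum_congr rfl fun i _ => (mul_smul _ _ _)
    _ = (D : ℚ) • ∑ j, b j • v j := by rw [← haeq, ← hbeq]
    _ = ∑ j, ((D : ℚ) * b j) • v j := by
        rw [Finset.smul_sum]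
        exact Finset.sum_congr rfl fun j _ => (mul_smul _ _ _).symm
    _ = ∑ j, (Y j : ℚ) • v j := Finset.sum_congr rfl fun j _ => by rw [hYeq]
end

section
/- Let G be a finitely generated group embedded via φ into a direct product A × G_0 with A a finite group, and let π_0 : A × G_0 → G_0 be the projection. For finite subsets 𝒢_1,...,𝒢_M ⊆ G, the intersection of semigroups ⟨𝒢_1⟩ ∩ ⋯ ∩ ⟨𝒢_M⟩ is non-empty if and only if ⟨π_0(φ(𝒢_1))⟩ ∩ ⋯ ∩ ⟨π_0(φ(𝒢_M))⟩ is non-empty. -/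
lemma stmt16_pow_mem {G : Type*} [Monoid G] {s : Subsemigroup G} {g : G}
    (hg : g ∈ s) : ∀ n : ℕ, 0 < n → g ^ n ∈ s := by
  intro n hn
  induction n with
  | zero => omega
  | succ k ih =>
    rcases Nat.eq_zero_or_pos k with hk | hk
    · simpa [hk] using hg
    · rw [pow_succ]
      exact s.mul_mem (ih hk) hg

/-- Reduction of Intersection Emptiness along an embedding φ : G ↪ A × G₀ with A a
finite group: the sub-semigroups ⟨𝒢_1⟩, …, ⟨𝒢_M⟩ have a common element iff their
images under π₀ ∘ φ do. -/
theorem stmt16 (G A G₀ : Type*) [Group G] [Group.FG G] [Group A] [Finite A] [Group G₀]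
    (φ : G →* A × G₀) (hφ : Function.Injective φ)
    (M : ℕ) (𝒢 : Fin M → Finset G) :
    (∃ g : G, ∀ m : Fin M, g ∈ Subsemigroup.closure ((𝒢 m : Set G))) ↔
    (∃ h : G₀, ∀ m : Fin M,
      h ∈ Subsemigroup.closure ((fun x : G => (φ x).2) '' (𝒢 m : Set G))) := by
  set f : G →* G₀ := (MonoidHom.snd A G₀).comp φ with hf
  have hfx : ∀ x : G, f x = (φ x).2 := fun x => rfl
  constructor
  · rintro ⟨g, hg⟩
    refine ⟨f g, fun m => ?_⟩
    refine Subsemigroup.closure_induction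
      (fun x hx => Subsemigroup.subset_closure ⟨x, hx, rfl⟩)
      (fun x y _ _ hx hy => ?_) (hg m)
    simpa [map_mul] using Subsemigroup.mul_mem _ hx hy
  · rintro ⟨h, hh⟩
    rcases Nat.eq_zero_or_pos M with hM | hM
    · exact ⟨1, fun m => (Nat.not_lt_zero m.1 (hM ▸ m.2)).elim⟩
    have key : ∀ m : Fin M, ∃ g, g ∈ Subsemigroup.closure (𝒢 m : Set G) ∧ f g = h := by
      intro m
      refine Subsemigroup.closure_induction ?_ ?_ (hh m)
      · rintro x ⟨y, hy, rfl⟩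
        exact ⟨y, Subsemigroup.subset_closure hy, rfl⟩
      · rintro x y _ _ ⟨gx, hgx, hfx'⟩ ⟨gy, hgy, hfy⟩
        exact ⟨gx * gy, Subsemigroup.mul_mem _ hgx hgy, by rw [map_mul, hfx', hfy]⟩
    choose g hg hgf using key
    set n := Nat.card A with hn
    have hnpos : 0 < n := Nat.card_pos
    have hsame : ∀ m : Fin M, g m ^ n = g ⟨0, hM⟩ ^ n := by
      intro m
      apply hφ
      rw [map_pow, map_pow]
      ext
      · simp [hn, pow_card_eq_one']
      · show (φ (g m)).2 ^ n = (φ (g ⟨0, hM⟩)).2 ^ n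
        rw [← hfx, ← hfx, hgf m, hgf ⟨0, hM⟩]
    exact ⟨g ⟨0, hM⟩ ^ n, fun m => hsame m ▸ stmt16_pow_mem (hg m) n hnpos⟩
end
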